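/- For each n, let A be the set of rationals u·w/v with v, w ≤ n^{1/6} natural numbers, gcd(v,w) = 1, u ≤ n^{2/3} a natural number all of whose prime factors exceed n^{1/6}. Connect u·w/v to v·z/w by an edge whenever both are of this form (v, w ≤ n^{1/6}, gcd(v,w)=1, u, z ≤ n^{2/3} with least prime factors > n^{1/6}). Then every product along an edge, (u·w/v)·(v·z/w) = u·z, is a positive integer of size at most n^{4/3}, and every sum along an edge, (w^2·u + v^2·z)/(v·w), is a ratio of a positive integer at most 2n and a positive integer at most n^{1/3}; consequently the number of distinct products along edges is at most n^{4/3} and the number of distinct sums along edges is at most 2·n^{4/3}. -/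
import Mathlib


/-- `Good n u v w` says the rational `u * w / v` is an admissible element:
`v, w ≤ n^{1/6}` coprime, `u ≤ n^{2/3}` with all prime factors `> n^{1/6}`. -/
def Good (n u v w : ℕ) : Prop :=
  1 ≤ u ∧ 1 ≤ v ∧ 1 ≤ w ∧
  (v : ℝ) ≤ (n : ℝ) ^ ((1 : ℝ) / 6) ∧ (w : ℝ) ≤ (n : ℝ) ^ ((1 : ℝ) / 6) ∧
  Nat.Coprime v w ∧ (u : ℝ) ≤ (n : ℝ) ^ ((2 : ℝ) / 3) ∧
  ∀ p : ℕ, p.Prime → p ∣ u → (n : ℝ) ^ ((1 : ℝ) / 6) < (p : ℝ)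

lemma prod_bound (n : ℕ) (hn : 1 ≤ n) {u v w z : ℕ} (h1 : Good n u v w) (h2 : Good n z w v) :
    ((u * z : ℕ) : ℝ) ≤ (n : ℝ) ^ ((4 : ℝ) / 3) := by
  obtain ⟨hu1, -, -, -, -, -, hu, -⟩ := h1
  obtain ⟨hz1, -, -, -, -, -, hz, -⟩ := h2
  have hn0 : (0:ℝ) < n := by exact_mod_cast hn
  have : ((u * z : ℕ) : ℝ) ≤ (n : ℝ) ^ ((2 : ℝ) / 3) * (n : ℝ) ^ ((2 : ℝ) / 3) := by
    push_cast
    exact mul_le_mul hu hz (by positivity) (by positivity)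
  calc ((u * z : ℕ) : ℝ) ≤ _ := this
    _ = (n : ℝ) ^ ((4 : ℝ) / 3) := by
        rw [← Real.rpow_add hn0]; norm_num

lemma sum_bounds (n : ℕ) (hn : 1 ≤ n) {u v w z : ℕ} (h1 : Good n u v w) (h2 : Good n z w v) :
    ((w ^ 2 * u + v ^ 2 * z : ℕ) : ℝ) ≤ 2 * n ∧ ((v * w : ℕ) : ℝ) ≤ (n : ℝ) ^ ((1 : ℝ) / 3) := by
  obtain ⟨hu1, hv1, hw1, hv, hw, -, hu, -⟩ := h1
  obtain ⟨hz1, -, -, -, -, -, hz, -⟩ := h2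
  have hn0 : (0:ℝ) < n := by exact_mod_cast hn
  have h16 : (0:ℝ) ≤ (n : ℝ) ^ ((1 : ℝ) / 6) := by positivity
  have hvw : ((v * w : ℕ) : ℝ) ≤ (n : ℝ) ^ ((1 : ℝ) / 3) := by
    have : ((v * w : ℕ) : ℝ) ≤ (n : ℝ) ^ ((1 : ℝ) / 6) * (n : ℝ) ^ ((1 : ℝ) / 6) := by
      push_cast; exact mul_le_mul hv hw (by positivity) h16
    calc ((v * w : ℕ) : ℝ) ≤ _ := this
      _ = (n : ℝ) ^ ((1 : ℝ) / 3) := by rw [← Real.rpow_add hn0]; norm_num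
  have key : ∀ a b : ℕ, (a : ℝ) ≤ (n : ℝ) ^ ((1 : ℝ) / 6) → (b : ℝ) ≤ (n : ℝ) ^ ((2 : ℝ) / 3) →
      ((a ^ 2 * b : ℕ) : ℝ) ≤ n := by
    intro a b ha hb
    have : ((a ^ 2 * b : ℕ) : ℝ) ≤ ((n : ℝ) ^ ((1 : ℝ) / 6)) ^ 2 * (n : ℝ) ^ ((2 : ℝ) / 3) := by
      push_cast
      exact mul_le_mul (by nlinarith [Nat.cast_nonneg (α := ℝ) a]) hb (by positivity) (by positivity)
    calc ((a ^ 2 * b : ℕ) : ℝ) ≤ _ := this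
      _ = (n : ℝ) := by
          rw [← Real.rpow_natCast ((n : ℝ) ^ ((1 : ℝ) / 6)) 2, ← Real.rpow_mul hn0.le,
            ← Real.rpow_add hn0]
          norm_num
  refine ⟨?_, hvw⟩
  have h1' := key w u hw hu
  have h2' := key v z hv hz
  push_cast at h1' h2' ⊢
  linarith

/-- Products along edges of the graph are integers of size at most `n^{4/3}`,
sums are ratios of an integer `≤ 2n` by an integer `≤ n^{1/3}`, so there are at
most `n^{4/3}` products and `2 n^{4/3}` sums along the edges. -/
theorem stmt_12 (n : ℕ) (hn : 1 ≤ n) :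
    (∀ u v w z : ℕ, Good n u v w → Good n z w v →
      ((u * w : ℚ) / v) * ((z * v : ℚ) / w) = ((u * z : ℕ) : ℚ) ∧
      0 < u * z ∧ ((u * z : ℕ) : ℝ) ≤ (n : ℝ) ^ ((4 : ℝ) / 3)) ∧
    (∀ u v w z : ℕ, Good n u v w → Good n z w v →
      ((u * w : ℚ) / v) + ((z * v : ℚ) / w) =
        ((w ^ 2 * u + v ^ 2 * z : ℕ) : ℚ) / ((v * w : ℕ) : ℚ) ∧
      0 < w ^ 2 * u + v ^ 2 * z ∧ ((w ^ 2 * u + v ^ 2 * z : ℕ) : ℝ) ≤ 2 * n ∧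
      0 < v * w ∧ ((v * w : ℕ) : ℝ) ≤ (n : ℝ) ^ ((1 : ℝ) / 3)) ∧
    (({x : ℚ | ∃ u v w z : ℕ, Good n u v w ∧ Good n z w v ∧
        x = ((u * w : ℚ) / v) * ((z * v : ℚ) / w)}.ncard : ℝ) ≤ (n : ℝ) ^ ((4 : ℝ) / 3)) ∧
    (({x : ℚ | ∃ u v w z : ℕ, Good n u v w ∧ Good n z w v ∧
        x = ((u * w : ℚ) / v) + ((z * v : ℚ) / w)}.ncard : ℝ) ≤ 2 * (n : ℝ) ^ ((4 : ℝ) / 3)) := by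
  have hn0 : (0:ℝ) < n := by exact_mod_cast hn
  have hprod_eq : ∀ u v w z : ℕ, Good n u v w → Good n z w v →
      ((u * w : ℚ) / v) * ((z * v : ℚ) / w) = ((u * z : ℕ) : ℚ) := by
    intro u v w z h1 h2
    have hv : (v : ℚ) ≠ 0 := by exact_mod_cast (Nat.one_le_iff_ne_zero.mp h1.2.1)
    have hw : (w : ℚ) ≠ 0 := by exact_mod_cast (Nat.one_le_iff_ne_zero.mp h1.2.2.1)
    push_cast
    field_simp
  have hsum_eq : ∀ u v w z : ℕ, Good n u v w → Good n z w v →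
      ((u * w : ℚ) / v) + ((z * v : ℚ) / w)
        = ((w ^ 2 * u + v ^ 2 * z : ℕ) : ℚ) / ((v * w : ℕ) : ℚ) := by
    intro u v w z h1 h2
    have hv : (v : ℚ) ≠ 0 := by exact_mod_cast (Nat.one_le_iff_ne_zero.mp h1.2.1)
    have hw : (w : ℚ) ≠ 0 := by exact_mod_cast (Nat.one_le_iff_ne_zero.mp h1.2.2.1)
    push_cast
    field_simp
  refine ⟨?_, ?_, ?_, ?_⟩
  · intro u v w z h1 h2
    exact ⟨hprod_eq u v w z h1 h2,
      Nat.mul_pos h1.1 h2.1, prod_bound n hn h1 h2⟩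
  · intro u v w z h1 h2
    have hb := sum_bounds n hn h1 h2
    refine ⟨hsum_eq u v w z h1 h2, ?_, hb.1, Nat.mul_pos h1.2.1 h1.2.2.1, hb.2⟩
    have := h1.2.2.1
    have := h1.1
    positivity
  · -- products
    set N := Nat.floor ((n : ℝ) ^ ((4 : ℝ) / 3)) with hN
    have hsub : {x : ℚ | ∃ u v w z : ℕ, Good n u v w ∧ Good n z w v ∧
        x = ((u * w : ℚ) / v) * ((z * v : ℚ) / w)} ⊆
        (fun k : ℕ => (k : ℚ)) '' ↑(Finset.Icc 1 N) := by
      rintro x ⟨u, v, w, z, h1, h2, rfl⟩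
      refine ⟨u * z, ?_, (hprod_eq u v w z h1 h2).symm⟩
      simp only [Finset.coe_Icc, Set.mem_Icc]
      refine ⟨Nat.mul_pos h1.1 h2.1, Nat.le_floor (prod_bound n hn h1 h2)⟩
    have hfin : ((fun k : ℕ => (k : ℚ)) '' ↑(Finset.Icc 1 N)).Finite :=
      (Finset.Icc 1 N).finite_toSet.image _
    have hle := Set.ncard_le_ncard hsub hfin
    have himg : ((fun k : ℕ => (k : ℚ)) '' ↑(Finset.Icc 1 N)).ncard ≤ N := by
      calc _ ≤ (↑(Finset.Icc 1 N) : Set ℕ).ncard := Set.ncard_image_le (Finset.Icc 1 N).finite_toSet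
        _ = N := by rw [Set.ncard_coe_finset, Nat.card_Icc]; omega
    have hNle : (N : ℝ) ≤ (n : ℝ) ^ ((4 : ℝ) / 3) := Nat.floor_le (by positivity)
    calc _ ≤ (N : ℝ) := by exact_mod_cast le_trans hle himg
      _ ≤ _ := hNle
  · -- sums
    set A := 2 * n with hA
    set B := Nat.floor ((n : ℝ) ^ ((1 : ℝ) / 3)) with hB
    have hsub : {x : ℚ | ∃ u v w z : ℕ, Good n u v w ∧ Good n z w v ∧
        x = ((u * w : ℚ) / v) + ((z * v : ℚ) / w)} ⊆
        (fun p : ℕ × ℕ => (p.1 : ℚ) / (p.2 : ℚ)) '' ↑(Finset.Icc 1 A ×ˢ Finset.Icc 1 B) := by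
      rintro x ⟨u, v, w, z, h1, h2, rfl⟩
      have hb := sum_bounds n hn h1 h2
      refine ⟨(w ^ 2 * u + v ^ 2 * z, v * w), ?_, (hsum_eq u v w z h1 h2).symm⟩
      simp only [Finset.coe_product, Set.mem_prod, Finset.coe_Icc, Set.mem_Icc]
      have hupos : 0 < w ^ 2 * u + v ^ 2 * z := by
        have := h1.2.2.1; have := h1.1; positivity
      refine ⟨⟨hupos, ?_⟩, Nat.mul_pos h1.2.1 h1.2.2.1, Nat.le_floor hb.2⟩
      have := hb.1
      have : ((w ^ 2 * u + v ^ 2 * z : ℕ) : ℝ) ≤ ((2 * n : ℕ) : ℝ) := by push_cast at this ⊢; linarith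
      exact_mod_cast this
    have hfin : ((fun p : ℕ × ℕ => (p.1 : ℚ) / (p.2 : ℚ)) ''
        ↑(Finset.Icc 1 A ×ˢ Finset.Icc 1 B)).Finite :=
      (Finset.Icc 1 A ×ˢ Finset.Icc 1 B).finite_toSet.image _
    have hle := Set.ncard_le_ncard hsub hfin
    have himg : ((fun p : ℕ × ℕ => (p.1 : ℚ) / (p.2 : ℚ)) ''
        ↑(Finset.Icc 1 A ×ˢ Finset.Icc 1 B)).ncard ≤ A * B := by
      calc _ ≤ (↑(Finset.Icc 1 A ×ˢ Finset.Icc 1 B) : Set (ℕ × ℕ)).ncard :=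
            Set.ncard_image_le (Finset.Icc 1 A ×ˢ Finset.Icc 1 B).finite_toSet
        _ = A * B := by
            rw [Set.ncard_coe_finset, Finset.card_product, Nat.card_Icc, Nat.card_Icc]
            simp
    have hAB : ((A * B : ℕ) : ℝ) ≤ 2 * (n : ℝ) ^ ((4 : ℝ) / 3) := by
      have hBle : (B : ℝ) ≤ (n : ℝ) ^ ((1 : ℝ) / 3) := Nat.floor_le (by positivity)
      have : ((A * B : ℕ) : ℝ) ≤ (2 * n) * (n : ℝ) ^ ((1 : ℝ) / 3) := by
        have h2 := mul_le_mul_of_nonneg_left hBle (by positivity : (0:ℝ) ≤ 2 * n)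
        simp only [hA]
        push_cast
        nlinarith
      calc ((A * B : ℕ) : ℝ) ≤ _ := this
        _ = 2 * ((n : ℝ) ^ ((1 : ℝ)) * (n : ℝ) ^ ((1 : ℝ) / 3)) := by
            rw [Real.rpow_one]; ring
        _ = 2 * (n : ℝ) ^ ((4 : ℝ) / 3) := by rw [← Real.rpow_add hn0]; norm_num
    calc _ ≤ ((A * B : ℕ) : ℝ) := by exact_mod_cast le_trans hle himg
      _ ≤ _ := hAB
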